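/- arXiv:1904.09145 — 3 statements merged into one kernel-verified Lean document; each statement's English description precedes it below -/
import Mathlib

section
/- Consider the East model on the set {1,...,M} with a frozen empty site at 0 (site x can be flipped iff site x-1 is empty, and site 0 is always empty). Any legal path of configurations starting from the fully occupied configuration and ending at a configuration in which site M is empty must pass through a configuration having at least ⌈log₂(M+1)⌉ empty sites. -/
/-- Value of an East-model configuration on `{1,…,M}`, with the convention that
site `0` is permanently empty (`false` = empty, `true` = occupied). -/
def eastVal (ω : ℕ → Bool) (x : ℕ) : Bool := if x = 0 then false else ω x

/-- A legal path for the East model on `{1,…,M}` with frozen empty site at `0`: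
at each step exactly one site `x ∈ {1,…,M}` is flipped, and the flip is legal,
i.e. site `x-1` is empty. -/
def eastLegalPath (M k : ℕ) (p : ℕ → ℕ → Bool) : Prop :=
  ∀ i < k, ∃ x, 1 ≤ x ∧ x ≤ M ∧ eastVal (p i) (x - 1) = false ∧
    p (i + 1) = Function.update (p i) x (! p i x)

/-- Number of empty sites of a configuration in `{1,…,M}`. -/
def emptyCount (M : ℕ) (ω : ℕ → Bool) : ℕ :=
  ((Finset.Icc 1 M).filter fun x => ω x = false).card

/-- number of empty sites in `(a, m]`. -/
def eastCnt (a m : ℕ) (ω : ℕ → Bool) : ℕ :=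
  ((Finset.Ioc a m).filter fun x => ω x = false).card

lemma eastCnt_eq_zero {a m : ℕ} {ω : ℕ → Bool} :
    eastCnt a m ω = 0 ↔ ∀ x, a < x → x ≤ m → ω x = true := by
  unfold eastCnt
  rw [Finset.card_eq_zero, Finset.filter_eq_empty_iff]
  simp [Finset.mem_Ioc]

lemma eastCnt_split (a b m : ℕ) (hab : a ≤ b) (hbm : b ≤ m) (ω : ℕ → Bool) :
    eastCnt a m ω = eastCnt a b ω + eastCnt b m ω := by
  unfold eastCnt
  rw [← Finset.Ioc_union_Ioc_eq_Ioc hab hbm, Finset.filter_union,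
    Finset.card_union_of_disjoint]
  simp only [Finset.disjoint_left, Finset.mem_filter, Finset.mem_Ioc]
  rintro x ⟨⟨h1, h2⟩, -⟩ ⟨⟨h3, h4⟩, -⟩
  omega

lemma eastCnt_congr {a m : ℕ} {ω ω' : ℕ → Bool}
    (h : ∀ x, a < x → x ≤ m → ω x = ω' x) : eastCnt a m ω = eastCnt a m ω' := by
  unfold eastCnt
  congr 1
  apply Finset.filter_congr
  intro x hx
  rw [Finset.mem_Ioc] at hx
  rw [h x hx.1 hx.2]

lemma east_reverse_legal (M k T : ℕ) (p : ℕ → ℕ → Bool) (hT : T ≤ k)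
    (h : eastLegalPath M k p) : eastLegalPath M T (fun i => p (T - i)) := by
  intro i hi
  obtain ⟨x, hx1, hxM, hleg, hstep⟩ := h (T - i - 1) (by omega)
  have hj : T - i - 1 + 1 = T - i := by omega
  have hj2 : T - (i + 1) = T - i - 1 := by omega
  rw [hj] at hstep
  refine ⟨x, hx1, hxM, ?_, ?_⟩
  · unfold eastVal at hleg ⊢
    by_cases h0 : x - 1 = 0
    · simp [h0]
    · simp only [h0, if_false] at hleg ⊢
      rw [hstep, Function.update_of_ne (by omega)]
      exact hleg
  · simp only [hj2]
    funext y
    by_cases hy : y = x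
    · subst hy
      rw [Function.update_self, hstep, Function.update_self, Bool.not_not]
    · rw [Function.update_of_ne hy, hstep, Function.update_of_ne hy]

lemma east_key (n : ℕ) : ∀ (M k : ℕ) (p : ℕ → ℕ → Bool), eastLegalPath M k p →
    ∀ a m T, T ≤ k → a + 2 ^ n ≤ m →
    (∀ x, a < x → x ≤ m → p 0 x = true) →
    p T m = false →
    ∃ i ≤ T, n + 1 ≤ eastCnt a m (p i) := by
  induction n with
  | zero =>
    intro M k p hp a m T hTk ham h0 hTm
    refine ⟨T, le_refl T, Finset.card_pos.mpr ⟨m, ?_⟩⟩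
    simp only [Finset.mem_filter, Finset.mem_Ioc]
    exact ⟨⟨by omega, le_refl m⟩, hTm⟩
  | succ n ih =>
    intro M k p hp a m T hTk ham h0 hTm
    obtain ⟨b, hb⟩ : ∃ b, b = a + 2 ^ n := ⟨_, rfl⟩
    have hpow : 1 ≤ 2 ^ n := Nat.one_le_two_pow
    have h2 : a + 2 ^ (n + 1) = a + 2 ^ n + 2 ^ n := by rw [pow_succ]; ring
    have hbm : b + 2 ^ n ≤ m := by omega
    have hab : a ≤ b := by omega
    have hbm' : b ≤ m := by omega
    -- inductive hypothesis applied to (b, m]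
    obtain ⟨T1, hT1T, hcntT1⟩ := ih M k p hp b m T hTk hbm
      (fun x hx1 hx2 => h0 x (by omega) hx2) hTm
    by_cases hcase : eastCnt a b (p T1) = 0
    · -- (a, b] fully occupied at time T1; reverse time
      have hP0 : eastCnt b m (p 0) = 0 :=
        eastCnt_eq_zero.mpr fun x hx1 hx2 => h0 x (by omega) hx2
      set S := Nat.findGreatest (fun j => eastCnt b m (p j) = 0) T1 with hSdef
      have hS_le : S ≤ T1 := Nat.findGreatest_le _
      have hScnt : eastCnt b m (p S) = 0 :=
        Nat.findGreatest_spec (P := fun j => eastCnt b m (p j) = 0) (Nat.zero_le _) hP0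
      have hT1pos : eastCnt b m (p T1) ≠ 0 := by omega
      have hST1 : S < T1 := by
        rcases lt_or_eq_of_le hS_le with h | h
        · exact h
        · exact absurd (h ▸ hScnt) hT1pos
      have hgt : ∀ j, S < j → j ≤ T1 → eastCnt b m (p j) ≠ 0 := by
        intro j hj hj'
        exact Nat.findGreatest_is_greatest (P := fun j => eastCnt b m (p j) = 0) hj hj'
      -- the flip at time S creates the first empty site in (b, m]; it is at b+1,
      -- and requires b to be empty at time S
      obtain ⟨x₀, hx₀1, hx₀M, hleg, hstep⟩ := hp S (by omega)
      have hSn : eastCnt b m (p (S + 1)) ≠ 0 := hgt (S + 1) (by omega) (by omega)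
      obtain ⟨y, hy⟩ := Finset.card_pos.mp (Nat.pos_of_ne_zero hSn)
      rw [Finset.mem_filter, Finset.mem_Ioc] at hy
      obtain ⟨⟨hyb, hym⟩, hyf⟩ := hy
      have hyS : p S y = true := eastCnt_eq_zero.mp hScnt y hyb hym
      have hyx : y = x₀ := by
        by_contra hne
        rw [hstep, Function.update_of_ne hne, hyS] at hyf
        simp at hyf
      subst hyx
      rename' y => x₀
      -- the flip site is b + 1 and b is empty at time S
      have hb0 : b ≠ 0 := by omega
      have hy1 : x₀ - 1 ≠ 0 → p S (x₀ - 1) = false := by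
        intro h
        unfold eastVal at hleg
        rwa [if_neg h] at hleg
      have hx₀b : x₀ = b + 1 := by
        by_contra hne
        have h1 : b < x₀ - 1 := by omega
        have h2 : x₀ - 1 ≤ m := by omega
        have := eastCnt_eq_zero.mp hScnt (x₀ - 1) h1 h2
        rw [hy1 (by omega)] at this
        simp at this
      have hSb : p S b = false := by
        have := hy1 (by omega)
        rwa [hx₀b, Nat.add_sub_cancel] at this
      -- apply the inductive hypothesis to the reversed path on (a, b]
      have hq : eastLegalPath M T1 (fun i => p (T1 - i)) :=
        east_reverse_legal M k T1 p (by omega) hp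
      obtain ⟨j, hj, hcnt2⟩ := ih M T1 (fun i => p (T1 - i)) hq a b (T1 - S)
        (by omega) (by omega)
        (by
          intro x hx1 hx2
          show p (T1 - 0) x = true
          rw [Nat.sub_zero]
          exact eastCnt_eq_zero.mp hcase x hx1 hx2)
        (by
          show p (T1 - (T1 - S)) b = false
          have : T1 - (T1 - S) = S := by omega
          rw [this]
          exact hSb)
      have hcnt2' : n + 1 ≤ eastCnt a b (p (T1 - j)) := hcnt2
      set i := T1 - j with hidef
      have hiS : S ≤ i := by omega
      have hiT1 : i ≤ T1 := by omega
      by_cases hieq : i = S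
      · -- use time S + 1 : flipping b+1 does not change (a,b]
        refine ⟨S + 1, by omega, ?_⟩
        have hagree : eastCnt a b (p (S + 1)) = eastCnt a b (p S) := by
          apply eastCnt_congr
          intro x hx1 hx2
          rw [hstep, Function.update_of_ne (by omega)]
        have hcnt3 : n + 1 ≤ eastCnt a b (p S) := by rw [← hieq]; exact hcnt2'
        rw [eastCnt_split a b m hab hbm', hagree]
        have h1 : 1 ≤ eastCnt b m (p (S + 1)) := Nat.one_le_iff_ne_zero.mpr hSn
        omega
      · refine ⟨i, by omega, ?_⟩
        have h1 : 1 ≤ eastCnt b m (p i) :=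
          Nat.one_le_iff_ne_zero.mpr (hgt i (by omega) hiT1)
        rw [eastCnt_split a b m hab hbm']
        omega
    · -- there is an empty site in (a, b] at time T1 already
      refine ⟨T1, hT1T, ?_⟩
      rw [eastCnt_split a b m hab hbm']
      omega

/-- Any legal East path from the fully occupied configuration to a configuration
with site `M` empty passes through a configuration with at least `⌈log₂(M+1)⌉`
empty sites. -/
theorem east_energy_barrier (M k : ℕ) (p : ℕ → ℕ → Bool)
    (hstart : ∀ x, p 0 x = true) (hpath : eastLegalPath M k p)
    (hend : p k M = false) :
    ∃ i ≤ k, Nat.clog 2 (M + 1) ≤ emptyCount M (p i) := by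
  rcases Nat.eq_zero_or_pos M with hM | hM
  · subst hM
    exact ⟨0, Nat.zero_le k, by simp [Nat.clog]⟩
  · obtain ⟨n, hn⟩ : ∃ n, Nat.clog 2 (M + 1) = n + 1 := by
      have : 0 < Nat.clog 2 (M + 1) := Nat.clog_pos (by norm_num) (by omega)
      exact ⟨Nat.clog 2 (M + 1) - 1, by omega⟩
    have hpow : 2 ^ n ≤ M := by
      by_contra h
      push_neg at h
      have : Nat.clog 2 (M + 1) ≤ n := (Nat.clog_le_iff_le_pow (by norm_num)).mpr (by omega)
      omega
    obtain ⟨i, hik, hcnt⟩ := east_key n M k p hpath 0 M k (le_refl k)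
      (by omega) (fun x _ _ => hstart x) hend
    refine ⟨i, hik, ?_⟩
    have heq : emptyCount M (p i) = eastCnt 0 M (p i) := by
      unfold emptyCount eastCnt
      rw [← Finset.Icc_add_one_left_eq_Ioc, Nat.zero_add]
    omega
end

section
/- For the East model combinatorics: if a legal path never visits a configuration with more than n empty sites, then starting from the fully occupied configuration on {1,...,M} with frozen empty boundary at 0, no site x with x ≥ 2ⁿ can ever be emptied along the path. -/
/-- Number of empty sites of a configuration in the window `(a, c]`. -/
def cntIn (a c : ℕ) (ω : ℕ → Bool) : ℕ :=
  ((Finset.Ioc a c).filter fun x => ω x = false).card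

lemma cntIn_add (a b c : ℕ) (hab : a ≤ b) (hbc : b ≤ c) (ω : ℕ → Bool) :
    cntIn a b ω + cntIn b c ω = cntIn a c ω := by
  unfold cntIn
  rw [← Finset.card_union_of_disjoint (Finset.disjoint_filter_filter
    (Finset.disjoint_left.mpr fun x hx hx' =>
      absurd (Finset.mem_Ioc.mp hx').1 (not_lt.mpr (Finset.mem_Ioc.mp hx).2))),
    ← Finset.filter_union, Finset.Ioc_union_Ioc_eq_Ioc hab hbc]

lemma cntIn_eq_zero {a c : ℕ} {ω : ℕ → Bool} (h : cntIn a c ω = 0) :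
    ∀ x, a < x → x ≤ c → ω x = true := by
  intro x h1 h2
  have h' := Finset.filter_eq_empty_iff.mp (Finset.card_eq_zero.mp h)
    (Finset.mem_Ioc.mpr ⟨h1, h2⟩)
  simpa using h'

lemma cntIn_eq_zero_of {a c : ℕ} {ω : ℕ → Bool}
    (h : ∀ x, a < x → x ≤ c → ω x = true) : cntIn a c ω = 0 := by
  rw [cntIn, Finset.card_eq_zero, Finset.filter_eq_empty_iff]
  intro x hx
  rw [Finset.mem_Ioc] at hx
  simp [h x hx.1 hx.2]

lemma cntIn_pos {a c : ℕ} {ω : ℕ → Bool} (h : 1 ≤ cntIn a c ω) :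
    ∃ x, a < x ∧ x ≤ c ∧ ω x = false := by
  obtain ⟨x, hx⟩ := Finset.card_pos.mp h
  rw [Finset.mem_filter, Finset.mem_Ioc] at hx
  exact ⟨x, hx.1.1, hx.1.2, hx.2⟩

lemma revLegal (M k t : ℕ) (p : ℕ → ℕ → Bool) (ht : t ≤ k)
    (hp : eastLegalPath M k p) : eastLegalPath M t (fun j => p (t - j)) := by
  intro i hi
  obtain ⟨x, hx1, hxM, hleg, hupd⟩ := hp (t - i - 1) (by omega)
  have e1 : t - i - 1 + 1 = t - i := by omega
  have e2 : t - (i + 1) = t - i - 1 := by omega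
  rw [e1] at hupd
  refine ⟨x, hx1, hxM, ?_, ?_⟩
  · by_cases hx : x = 1
    · simp [hx, eastVal]
    · have hne : x - 1 ≠ 0 := by omega
      have hne2 : x - 1 ≠ x := by omega
      simp only [eastVal, if_neg hne] at hleg ⊢
      rw [hupd, Function.update_of_ne hne2]
      exact hleg
  · simp only []
    rw [e2]
    funext y
    by_cases hy : y = x
    · subst hy
      rw [Function.update_self, hupd, Function.update_self]
      simp
    · rw [Function.update_of_ne hy, hupd, Function.update_of_ne hy]

lemma eastMain (M : ℕ) : ∀ (n : ℕ) (p : ℕ → ℕ → Bool) (k a c : ℕ),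
    eastLegalPath M k p →
    (∀ x, a < x → x ≤ c → p 0 x = true) →
    (∀ i ≤ k, cntIn a c (p i) ≤ n) →
    ∀ i ≤ k, ∀ x, a + 2 ^ n ≤ x → x ≤ c → p i x = true := by
  intro n
  induction n with
  | zero =>
    intro p k a c hp h0 hcap i hi x hx1 hx2
    by_contra hfalse
    have hxf : p i x = false := by
      cases h : p i x
      · rfl
      · exact absurd h hfalse
    have h1 : 1 ≤ cntIn a c (p i) := Finset.card_pos.mpr
      ⟨x, Finset.mem_filter.mpr ⟨Finset.mem_Ioc.mpr ⟨by omega, hx2⟩, hxf⟩⟩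
    have := hcap i hi
    omega
  | succ n IH =>
    intro p k a c hp h0 hcap
    classical
    have h2n : 0 < 2 ^ n := pow_pos (by norm_num) n
    -- Subclaim: the window (a + 2^n, c] never has more than n vacancies.
    have SC : ∀ i ≤ k, cntIn (a + 2 ^ n) c (p i) ≤ n := by
      by_contra hS
      push_neg at hS
      obtain ⟨t0, ht0k, ht0⟩ := hS
      have hex : ∃ t, t ≤ k ∧ n + 1 ≤ cntIn (a + 2 ^ n) c (p t) := ⟨t0, ht0k, ht0⟩
      set t1 := Nat.find hex with ht1def
      obtain ⟨ht1k, ht1⟩ := Nat.find_spec hex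
      rw [← ht1def] at ht1k ht1
      have ht1min : ∀ t, t < t1 → cntIn (a + 2 ^ n) c (p t) ≤ n := by
        intro t htl
        by_contra hh
        push_neg at hh
        exact Nat.find_min hex htl ⟨le_trans htl.le ht1k, hh⟩
      have hbc : a + 2 ^ n ≤ c := by
        obtain ⟨y0, h1, h2, _⟩ := cntIn_pos (le_trans (by omega) ht1)
        omega
      have hsum : ∀ t, cntIn a (a + 2 ^ n) (p t) + cntIn (a + 2 ^ n) c (p t)
          = cntIn a c (p t) := fun t => cntIn_add a (a + 2 ^ n) c (by omega) hbc (p t)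
      have h00 : cntIn (a + 2 ^ n) c (p 0) = 0 :=
        cntIn_eq_zero_of (fun x hx1 hx2 => h0 x (by omega) hx2)
      have ht1pos : 0 < t1 := by
        rcases Nat.eq_zero_or_pos t1 with h | h
        · exfalso; rw [h] at ht1; omega
        · exact h
      set v := Nat.findGreatest (fun t => cntIn (a + 2 ^ n) c (p t) = 0) (t1 - 1) with hvdef
      have hv0 : cntIn (a + 2 ^ n) c (p v) = 0 :=
        Nat.findGreatest_spec (P := fun t => cntIn (a + 2 ^ n) c (p t) = 0)
          (Nat.zero_le _) h00
      have hvle : v ≤ t1 - 1 :=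
        Nat.findGreatest_le (P := fun t => cntIn (a + 2 ^ n) c (p t) = 0) _
      have hgt : ∀ s, v < s → s ≤ t1 - 1 → cntIn (a + 2 ^ n) c (p s) ≠ 0 :=
        fun s h1 h2 => Nat.findGreatest_is_greatest
          (P := fun t => cntIn (a + 2 ^ n) c (p t) = 0) h1 h2
      have hpos : ∀ s, v < s → s ≤ t1 → 1 ≤ cntIn (a + 2 ^ n) c (p s) := by
        intro s h1 h2
        rcases eq_or_lt_of_le h2 with he | hl
        · rw [he]; omega
        · have := hgt s h1 (by omega); omega
      have hcapab : ∀ s, v < s → s ≤ t1 → cntIn a (a + 2 ^ n) (p s) ≤ n := by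
        intro s h1 h2
        have := hsum s
        have := hpos s h1 h2
        have := hcap s (by omega)
        omega
      -- the reversed path from t1
      have hq : eastLegalPath M t1 (fun j => p (t1 - j)) := revLegal M k t1 p ht1k hp
      have hq0 : cntIn a (a + 2 ^ n) (p t1) = 0 := by
        have := hsum t1
        have := hcap t1 ht1k
        omega
      have hrev := IH (fun j => p (t1 - j)) (t1 - (v + 1)) a (a + 2 ^ n)
        (fun i hi => hq i (by omega))
        (by
          intro x hx1 hx2
          simp only [Nat.sub_zero]
          exact cntIn_eq_zero hq0 x hx1 hx2)
        (by
          intro j hj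
          exact hcapab (t1 - j) (by omega) (by omega))
      have hbocc : ∀ s, v + 1 ≤ s → s ≤ t1 → p s (a + 2 ^ n) = true := by
        intro s h1 h2
        have h := hrev (t1 - s) (by omega) (a + 2 ^ n) le_rfl le_rfl
        simpa [show t1 - (t1 - s) = s by omega] using h
      -- first vacancy creation in (a+2^n, c] after time v
      have h1pos : 1 ≤ cntIn (a + 2 ^ n) c (p (v + 1)) := hpos (v + 1) (by omega) (by omega)
      obtain ⟨y, hy1, hy2, hy3⟩ := cntIn_pos h1pos
      have hyv : p v y = true := cntIn_eq_zero hv0 y hy1 hy2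
      obtain ⟨z, hz1, hzM, hzleg, hzupd⟩ := hp v (by omega)
      have hyz : y = z := by
        by_contra hne
        rw [hzupd, Function.update_of_ne hne, hyv] at hy3
        exact Bool.noConfusion hy3
      rw [← hyz] at hzleg hzupd
      have hyne0 : y - 1 ≠ 0 := by omega
      rw [eastVal, if_neg hyne0] at hzleg
      have hy1' : y - 1 = a + 2 ^ n := by
        by_contra h
        have hlt : a + 2 ^ n < y - 1 := by omega
        have := cntIn_eq_zero hv0 (y - 1) hlt (by omega)
        rw [this] at hzleg
        exact Bool.noConfusion hzleg
      have hbne : a + 2 ^ n ≠ y := by omega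
      have hfin : p (v + 1) (a + 2 ^ n) = false := by
        rw [hzupd, Function.update_of_ne hbne, ← hy1']
        exact hzleg
      have := hbocc (v + 1) le_rfl (by omega)
      rw [this] at hfin
      exact Bool.noConfusion hfin
    have hmain := IH p k (a + 2 ^ n) c hp
      (fun x hx1 hx2 => h0 x (by omega) hx2) SC
    intro i hi x hx1 hx2
    have hpow : (2 : ℕ) ^ (n + 1) = 2 ^ n + 2 ^ n := by
      rw [pow_succ]; ring
    exact hmain i hi x (by omega) hx2

/-- If a legal East path started from the fully occupied configuration never
visits a configuration with more than `n` empty sites, then no site `x ≥ 2^n`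
can ever be emptied along the path. -/
theorem east_barrier_quantitative (M k n : ℕ) (p : ℕ → ℕ → Bool)
    (hstart : ∀ x, p 0 x = true) (hpath : eastLegalPath M k p)
    (hbound : ∀ i ≤ k, emptyCount M (p i) ≤ n) :
    ∀ i ≤ k, ∀ x, 2 ^ n ≤ x → x ≤ M → p i x = true := by
  have hIcc : Finset.Icc 1 M = Finset.Ioc 0 M := by
    ext x
    simp only [Finset.mem_Icc, Finset.mem_Ioc]
    omega
  have hcap : ∀ i ≤ k, cntIn 0 M (p i) ≤ n := by
    intro i hi
    have := hbound i hi
    rwa [emptyCount, hIcc] at this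
  intro i hi x hx1 hx2
  exact eastMain M n p k 0 M hpath (fun x _ _ => hstart x) hcap i hi x (by omega) hx2
end

section
/- Let u₁, u₂ ∈ S¹ be two directions such that no update rule U₀ ∈ U is contained in H_{u₁} ∪ H_{u₂}. Then the set (H_{u₁} ∪ H_{u₂}) ∩ ℤ² is stable for U-bootstrap percolation, and more generally for any x₁, x₂ ∈ ℝ² the set (H_{u₁}(x₁) ∪ H_{u₂}(x₂)) ∩ ℤ² is stable. -/
/-- One step of the `U`-bootstrap percolation dynamics. -/
def bootstrapMap (U : Finset (Finset (ℤ × ℤ))) (A : Set (ℤ × ℤ)) : Set (ℤ × ℤ) :=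
  A ∪ {x | ∃ U₀ ∈ U, ∀ u ∈ U₀, u + x ∈ A}

/-- The bootstrap closure `[A]`. -/
def btClosure (U : Finset (Finset (ℤ × ℤ))) (A : Set (ℤ × ℤ)) : Set (ℤ × ℤ) :=
  ⋃ t : ℕ, (bootstrapMap U)^[t] A

/-- Euclidean inner product of a real direction with a lattice point. -/
def dotZ (u : ℝ × ℝ) (x : ℤ × ℤ) : ℝ := u.1 * (x.1 : ℝ) + u.2 * (x.2 : ℝ)

/-- Euclidean inner product of two real vectors. -/
def dotR (u x : ℝ × ℝ) : ℝ := u.1 * x.1 + u.2 * x.2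

/-- The discrete open half-plane `H_u ∩ ℤ²`. -/
def hpZ (u : ℝ × ℝ) : Set (ℤ × ℤ) := {x | dotZ u x < 0}

/-- The discrete open half-plane `H_u(x) ∩ ℤ²`,
where `H_u(x) = {y : ⟨u, y - x⟩ < 0}`. -/
def hpZx (u : ℝ × ℝ) (x : ℝ × ℝ) : Set (ℤ × ℤ) := {y | dotZ u y < dotR u x}


lemma btClosure_fixed (U : Finset (Finset (ℤ × ℤ))) (A : Set (ℤ × ℤ))
    (h : bootstrapMap U A = A) : btClosure U A = A := by
  have hiter : ∀ t : ℕ, (bootstrapMap U)^[t] A = A := by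
    intro t
    induction t with
    | zero => rfl
    | succ n ih => rw [Function.iterate_succ_apply', ih, h]
  ext x
  simp only [btClosure, Set.mem_iUnion]
  constructor
  · rintro ⟨t, ht⟩; rwa [hiter t] at ht
  · intro hx; exact ⟨0, hx⟩

lemma hpZx_stable (U : Finset (Finset (ℤ × ℤ))) (u₁ u₂ : ℝ × ℝ)
    (hstab : ∀ U₀ ∈ U, ¬ (∀ p ∈ U₀, dotZ u₁ p < 0 ∨ dotZ u₂ p < 0))
    (x₁ x₂ : ℝ × ℝ) :
    btClosure U (hpZx u₁ x₁ ∪ hpZx u₂ x₂) = hpZx u₁ x₁ ∪ hpZx u₂ x₂ := by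
  apply btClosure_fixed
  apply Set.union_eq_self_of_subset_right
  rintro x ⟨U₀, hU₀, hall⟩
  by_contra hx
  simp only [Set.mem_union, hpZx, Set.mem_setOf_eq, not_or, not_lt] at hx
  apply hstab U₀ hU₀
  intro p hp
  have := hall p hp
  simp only [Set.mem_union, hpZx, Set.mem_setOf_eq] at this
  have hadd : ∀ u : ℝ × ℝ, dotZ u (p + x) = dotZ u p + dotZ u x := by
    intro u
    simp [dotZ, Prod.fst_add, Prod.snd_add]
    push_cast
    ring
  rcases this with h | h
  · left; rw [hadd] at h; linarith [hx.1]
  · right; rw [hadd] at h; linarith [hx.2]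

/-- If no rule is contained in `H_{u₁} ∪ H_{u₂}`, then `(H_{u₁} ∪ H_{u₂}) ∩ ℤ²`
is stable, and more generally `(H_{u₁}(x₁) ∪ H_{u₂}(x₂)) ∩ ℤ²` is stable for
all `x₁, x₂ ∈ ℝ²`. -/
theorem union_halfplanes_stable (U : Finset (Finset (ℤ × ℤ)))
    (hU : ∀ U₀ ∈ U, U₀.Nonempty ∧ ((0, 0) : ℤ × ℤ) ∉ U₀)
    (u₁ u₂ : ℝ × ℝ) (hu₁ : u₁.1 ^ 2 + u₁.2 ^ 2 = 1) (hu₂ : u₂.1 ^ 2 + u₂.2 ^ 2 = 1)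
    (hstab : ∀ U₀ ∈ U, ¬ (∀ p ∈ U₀, dotZ u₁ p < 0 ∨ dotZ u₂ p < 0)) :
    btClosure U (hpZ u₁ ∪ hpZ u₂) = hpZ u₁ ∪ hpZ u₂ ∧
    ∀ x₁ x₂ : ℝ × ℝ,
      btClosure U (hpZx u₁ x₁ ∪ hpZx u₂ x₂) = hpZx u₁ x₁ ∪ hpZx u₂ x₂ := by
  have h0 : ∀ u : ℝ × ℝ, hpZ u = hpZx u (0, 0) := by
    intro u
    ext y
    simp [hpZ, hpZx, dotR]
  refine ⟨?_, hpZx_stable U u₁ u₂ hstab⟩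
  rw [h0 u₁, h0 u₂]
  exact hpZx_stable U u₁ u₂ hstab (0,0) (0,0)
end
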